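/- For every integer n ≥ 2 and all i, j ∈ {1, …, n−1}, |D_n(i,j)| equals the number of primitive Dyck paths of semilength n whose last peak has height j+1 and whose first peak has height at least i. -/

import Mathlib

/-- A Dyck word: a list of booleans (`true` = rise, `false` = fall) with equally many
rises and falls such that every prefix has at least as many rises as falls. -/
def IsDyckWord (w : List Bool) : Prop :=
  w.count true = w.count false ∧ ∀ p, p <+: w → p.count false ≤ p.count true

/-- The list of heights of the peaks (occurrences of the factor `rf`) of a word,
from left to right. The height of a peak is the number of rises minus the number
of falls in the prefix ending with the rise of that peak. -/
def peakHeights (w : List Bool) : List ℕ :=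
  (List.range w.length).filterMap (fun k =>
    if w[k]? = some true ∧ w[k + 1]? = some false then
      some ((w.take (k + 1)).count true - (w.take (k + 1)).count false)
    else none)

/-- `DyckD n i j` is the set of Dyck paths of semilength `n` whose first peak has
height `i` and whose last peak has height `j`. -/
def DyckD (n i j : ℕ) : Set (List Bool) :=
  {w | IsDyckWord w ∧ w.count true = n ∧
    (peakHeights w).head? = some i ∧ (peakHeights w).getLast? = some j}
/-- A Dyck word is primitive if every proper nonempty prefix has strictly more
rises than falls, i.e. the path touches the x-axis only at its endpoints. -/
def IsPrimitiveWord (w : List Bool) : Prop :=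
  ∀ p, p <+: w → p ≠ [] → p ≠ w → p.count false < p.count true

/-!
A path in `D_n(i,j)` has the form `r^i f z` with `z` ending in `r f^j`. Moving the fall after the
first run to the end gives `r^i z f`. Deleting a peak `rf` preserves being a Dyck word, and
`r w f` is a primitive Dyck word exactly when `w` is a Dyck word, so `r^i z f` is a primitive Dyck
path; it still starts with `r^i`, and its last peak `r f^(j+1)` is one higher. Both sets are
therefore injective images of the same set of words `z`.
-/

open List

namespace List

variable {α : Type*}

theorem forall_prefix_cons {P : List α → Prop} {a : α} {l : List α} :
    (∀ p, p <+: a :: l → P p) ↔ P [] ∧ ∀ q, q <+: l → P (a :: q) := by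
  simp only [prefix_cons_iff]
  constructor
  · intro h
    exact ⟨h [] (Or.inl rfl), fun q hq => h _ (Or.inr ⟨q, rfl, hq⟩)⟩
  · rintro ⟨hnil, hcons⟩ p (rfl | ⟨q, rfl, hq⟩)
    exacts [hnil, hcons q hq]

theorem forall_prefix_append {P : List α → Prop} {x y : List α} :
    (∀ p, p <+: x ++ y → P p) ↔
      (∀ p, p <+: x → P p) ∧ ∀ q, q <+: y → P (x ++ q) := by
  induction x generalizing P with
  | nil =>
    exact ⟨fun h => ⟨fun p hp => h p (prefix_nil.mp hp ▸ nil_prefix), h⟩, fun h => h.2⟩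
  | cons a x ih =>
    rw [cons_append, forall_prefix_cons, forall_prefix_cons, ih]
    simp only [cons_append]
    tauto

theorem replicate_prefix_replicate_append_cons_iff {a b : α} (hab : a ≠ b) {i m : ℕ}
    {v : List α} : replicate i a <+: replicate m a ++ b :: v ↔ i ≤ m := by
  induction m generalizing i with
  | zero => cases i <;> simp [replicate_succ, hab]
  | succ m ih => cases i <;> simp [replicate_succ, ih]

theorem cons_replicate_suffix_append_iff_of_mem {a b : α} (hab : a ≠ b) {j : ℕ}
    {x s : List α} (ha : a ∈ s) :
    a :: replicate j b <:+ x ++ s ↔ a :: replicate j b <:+ s := by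
  refine ⟨fun ⟨u, hu⟩ => ?_, suffix_append_of_suffix⟩
  rcases append_eq_append_iff.mp hu with ⟨c, rfl, hc⟩ | ⟨c, rfl, rfl⟩
  · rcases c with _ | ⟨c₀, c⟩
    · exact hc ▸ suffix_refl _
    · obtain ⟨-, hc⟩ := cons_eq_cons.mp hc
      have : a ∈ replicate j b := hc ▸ mem_append_right c ha
      exact absurd (eq_of_mem_replicate this) hab
  · exact suffix_append _ _

theorem exists_eq_replicate_append_cons {b : Bool} {w : List Bool} (h : (!b) ∈ w) :
    ∃ m v, w = replicate m b ++ (!b) :: v := by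
  induction w with
  | nil => simp at h
  | cons a w ih =>
    by_cases ha : a = !b
    · exact ⟨0, w, by simp [ha]⟩
    · have hab : a = b := by cases a <;> cases b <;> simp_all
      obtain ⟨m, v, rfl⟩ := ih (by simpa [ha, eq_comm] using h)
      exact ⟨m + 1, v, by simp [hab, replicate_succ]⟩

section FilterMapRange

variable {β : Type*} {g : ℕ → Option β} {n K : ℕ} {b : β}

theorem range_eq_range_append_cons (hK : K < n) :
    range n = range K ++ K :: (range (n - K - 1)).map (K + 1 + ·) := by
  conv_lhs => rw [show n = K + 1 + (n - K - 1) by omega, range_add, range_succ]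
  simp

theorem head?_filterMap_range_eq_some (hK : K < n) (hb : g K = some b)
    (hnone : ∀ k < K, g k = none) : ((range n).filterMap g).head? = some b := by
  rw [head?_filterMap, findSome?_eq_some_iff]
  exact ⟨_, K, _, range_eq_range_append_cons hK, hb, by simpa using hnone⟩

theorem getLast?_filterMap_range_eq_some (hK : K < n) (hb : g K = some b)
    (hnone : ∀ k, K < k → g k = none) : ((range n).filterMap g).getLast? = some b := by
  rw [getLast?_filterMap, findSome?_eq_some_iff, range_eq_range_append_cons hK]
  refine ⟨((range (n - K - 1)).map (K + 1 + ·)).reverse, K, (range K).reverse, by simp, hb, ?_⟩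
  simpa using fun a _ => hnone _ (by omega)

end FilterMapRange

end List

theorem head?_peakHeights_replicate_append_cons {m : ℕ} (hm : 1 ≤ m) (v : List Bool) :
    (peakHeights (replicate m true ++ false :: v)).head? = some m := by
  apply head?_filterMap_range_eq_some (K := m - 1) (by grind)
  · rw [if_pos]
    · simp [show m - 1 + 1 = m by omega, count_replicate]
    · simp [getElem?_append, show m - 1 + 1 = m by omega, show 0 < m by omega]
  · intro k hk
    refine if_neg ?_
    simp [getElem?_append, getElem?_replicate, show k + 1 < m by omega]

theorem getLast?_peakHeights_append_cons_replicate {t : ℕ} (ht : 1 ≤ t) (u : List Bool) :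
    (peakHeights (u ++ true :: replicate t false)).getLast? =
      some (u.count true + 1 - u.count false) := by
  apply getLast?_filterMap_range_eq_some (K := u.length) (by simp)
  · rw [if_pos]
    · simp [take_append, take_of_length_le (Nat.le_succ _)]
    · simp [getElem?_append_right, getElem?_replicate, Nat.one_le_iff_ne_zero.mp ht]
  · intro k hk
    obtain ⟨s, rfl⟩ := Nat.exists_eq_add_of_lt hk
    refine if_neg ?_
    rw [getElem?_append_right (by omega), show u.length + s + 1 - u.length = s + 1 by omega]
    simp [getElem?_replicate]

namespace IsDyckWord

variable {w : List Bool}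

theorem true_mem_of_ne_nil (hw : IsDyckWord w) (hne : w ≠ []) : true ∈ w := by
  have hbal := hw.1
  have hlen := count_true_add_count_false w
  have hpos := length_pos_iff.mpr hne
  exact count_pos_iff.mp (by omega)

theorem false_mem_of_ne_nil (hw : IsDyckWord w) (hne : w ≠ []) : false ∈ w := by
  exact count_pos_iff.mp (hw.1 ▸ count_pos_iff.mpr (hw.true_mem_of_ne_nil hne))

theorem exists_eq_replicate_append_cons (hw : IsDyckWord w) (hne : w ≠ []) :
    ∃ m v, 1 ≤ m ∧ w = replicate m true ++ false :: v := by
  obtain ⟨m, v, rfl⟩ :=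
    List.exists_eq_replicate_append_cons (b := true) (hw.false_mem_of_ne_nil hne)
  refine ⟨m, v, Nat.one_le_iff_ne_zero.mpr ?_, rfl⟩
  rintro rfl
  simpa using hw.2 [false] (by simp)

theorem exists_eq_append_cons_replicate (hw : IsDyckWord w) (hne : w ≠ []) :
    ∃ u t, 1 ≤ t ∧ w = u ++ true :: replicate t false := by
  obtain ⟨t, v, hv⟩ := List.exists_eq_replicate_append_cons (b := false) (w := w.reverse)
    (by simpa using hw.true_mem_of_ne_nil hne)
  have hw' : w = v.reverse ++ true :: replicate t false := by
    simpa using congrArg reverse hv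
  refine ⟨v.reverse, t, Nat.one_le_iff_ne_zero.mpr ?_, hw'⟩
  rintro rfl
  have hbal : v.count true + 1 = v.count false := by simpa [hw'] using hw.1
  have hpre : v.count false ≤ v.count true := by
    simpa using hw.2 v.reverse ⟨[true], by simpa using hw'.symm⟩
  omega

end IsDyckWord

theorem isDyckWord_append_cons_cons {x y : List Bool} :
    IsDyckWord (x ++ true :: false :: y) ↔ IsDyckWord (x ++ y) := by
  unfold IsDyckWord
  simp only [forall_prefix_append, forall_prefix_cons, count_append, count_cons_self,
    count_cons_of_ne Bool.false_ne_true, count_cons_of_ne Bool.false_ne_true.symm, count_nil]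
  constructor
  · rintro ⟨hbal, hx, -, -, hy⟩
    exact ⟨by omega, hx, fun q hq => by have := hy q hq; omega⟩
  · rintro ⟨hbal, hx, hy⟩
    have := hx x (prefix_refl x)
    exact ⟨by omega, hx, this, by omega, fun q hq => by have := hy q hq; omega⟩

theorem isDyckWord_cons_append_and_isPrimitiveWord_iff {w : List Bool} :
    IsDyckWord (true :: (w ++ [false])) ∧ IsPrimitiveWord (true :: (w ++ [false])) ↔
      IsDyckWord w := by
  unfold IsDyckWord IsPrimitiveWord
  simp only [forall_prefix_cons, prefix_concat_iff, or_imp, forall_and, forall_eq, count_append,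
    count_cons_self, count_cons_of_ne Bool.false_ne_true, count_cons_of_ne Bool.false_ne_true.symm,
    count_nil]
  constructor
  · rintro ⟨⟨hbal, -⟩, -, -, hprim⟩
    refine ⟨by omega, fun p hp => Nat.lt_succ_iff.mp (hprim p hp (cons_ne_nil _ _) fun h => ?_)⟩
    obtain rfl := cons_injective h
    simpa using hp.length_le
  · rintro ⟨hbal, hp⟩
    refine ⟨⟨by omega, le_rfl, by omega, fun p h => (hp p h).trans (Nat.le_succ _)⟩,
      fun h => absurd rfl h, fun _ h => absurd rfl h, fun p h _ _ => Nat.lt_succ_of_le (hp p h)⟩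

theorem isDyckWord_replicate_append_concat_and_isPrimitiveWord_iff {i : ℕ} (hi : 1 ≤ i)
    {z : List Bool} :
    IsDyckWord (replicate i true ++ z ++ [false]) ∧
        IsPrimitiveWord (replicate i true ++ z ++ [false]) ↔
      IsDyckWord (replicate i true ++ false :: z) := by
  obtain ⟨k, rfl⟩ := Nat.exists_eq_add_of_le' hi
  have hl : replicate (k + 1) true ++ z ++ [false] =
      true :: (replicate k true ++ z ++ [false]) := by
    simp [replicate_succ]
  have hr : replicate (k + 1) true ++ false :: z = replicate k true ++ true :: false :: z := by
    simp [replicate_succ']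
  rw [hl, hr, isDyckWord_append_cons_cons, isDyckWord_cons_append_and_isPrimitiveWord_iff]

theorem head?_peakHeights_eq_some_iff {w : List Bool} (hw : IsDyckWord w) {i : ℕ} (hi : 1 ≤ i) :
    (peakHeights w).head? = some i ↔ ∃ z, w = replicate i true ++ false :: z := by
  refine ⟨fun h => ?_, fun ⟨z, hz⟩ => hz ▸ head?_peakHeights_replicate_append_cons hi z⟩
  have hne : w ≠ [] := by rintro rfl; simp [peakHeights] at h
  obtain ⟨m, v, hm, rfl⟩ := hw.exists_eq_replicate_append_cons hne
  rw [head?_peakHeights_replicate_append_cons hm, Option.some_inj] at h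
  exact ⟨v, h ▸ rfl⟩

theorem le_headI_peakHeights_iff {w : List Bool} (hw : IsDyckWord w) (hne : w ≠ []) {i : ℕ} :
    i ≤ (peakHeights w).headI ↔ replicate i true <+: w := by
  obtain ⟨m, v, hm, rfl⟩ := hw.exists_eq_replicate_append_cons hne
  obtain ⟨l, hl⟩ := head?_eq_some_iff.mp (head?_peakHeights_replicate_append_cons hm v)
  rw [hl, headI_cons, replicate_prefix_replicate_append_cons_iff Bool.false_ne_true.symm]

theorem getLast?_peakHeights_eq_some_iff {w : List Bool} (hw : IsDyckWord w) {j : ℕ}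
    (hj : 1 ≤ j) : (peakHeights w).getLast? = some j ↔ true :: replicate j false <:+ w := by
  have hlast : ∀ u t, 1 ≤ t → w = u ++ true :: replicate t false →
      (peakHeights w).getLast? = some t := by
    rintro u t ht rfl
    have hbal : u.count true + 1 = u.count false + t := by simpa [count_replicate] using hw.1
    rw [getLast?_peakHeights_append_cons_replicate ht]
    congr 1
    omega
  refine ⟨fun h => ?_, fun ⟨u, hu⟩ => hlast u j hj hu.symm⟩
  have hne : w ≠ [] := by rintro rfl; simp [peakHeights] at h
  obtain ⟨u, t, ht, hut⟩ := hw.exists_eq_append_cons_replicate hne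
  rw [hlast u t ht hut, Option.some_inj] at h
  exact ⟨u, h ▸ hut.symm⟩

def PrimitiveDyckD (n i j : ℕ) : Set (List Bool) :=
  {w | IsDyckWord w ∧ w.count true = n ∧ IsPrimitiveWord w ∧
    (peakHeights w).getLast? = some j ∧ i ≤ (peakHeights w).headI}

section Bijection

variable {i j : ℕ} {z : List Bool}

theorem getLast?_peakHeights_replicate_append_cons_eq_some_iff
    (hw : IsDyckWord (replicate i true ++ false :: z)) (hz : true ∈ z) (hj : 1 ≤ j) :
    (peakHeights (replicate i true ++ false :: z)).getLast? = some j ↔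
      true :: replicate j false <:+ z := by
  have hsplit : replicate i true ++ false :: z = (replicate i true ++ [false]) ++ z := by simp
  rw [getLast?_peakHeights_eq_some_iff hw hj, hsplit,
    cons_replicate_suffix_append_iff_of_mem Bool.false_ne_true.symm hz]

theorem getLast?_peakHeights_replicate_append_concat_eq_some_iff
    (hw : IsDyckWord (replicate i true ++ z ++ [false])) (hz : true ∈ z) :
    (peakHeights (replicate i true ++ z ++ [false])).getLast? = some (j + 1) ↔
      true :: replicate j false <:+ z := by
  rw [getLast?_peakHeights_eq_some_iff hw (Nat.le_add_left 1 j), replicate_succ', ← cons_append,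
    suffix_append_inj_of_length_eq rfl, and_iff_left rfl,
    cons_replicate_suffix_append_iff_of_mem Bool.false_ne_true.symm hz]

theorem exists_eq_replicate_append_concat_of_mem_primitiveDyckD {n : ℕ} {v : List Bool}
    (hv : v ∈ PrimitiveDyckD n i (j + 1)) : ∃ z, v = replicate i true ++ z ++ [false] := by
  obtain ⟨hd, -, -, hlast, hhead⟩ := hv
  obtain ⟨u, rfl⟩ := (getLast?_peakHeights_eq_some_iff hd (Nat.le_add_left 1 j)).1 hlast
  have hpre := (le_headI_peakHeights_iff hd (by simp)).1 hhead
  rw [replicate_succ', ← cons_append, ← append_assoc, prefix_concat_iff] at hpre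
  rcases hpre with h | ⟨z, hz⟩
  · simpa using congrArg (false ∈ ·) h
  · exact ⟨z, by rw [hz, replicate_succ', ← cons_append, ← append_assoc]⟩

theorem replicate_append_concat_mem_primitiveDyckD_iff {n : ℕ} (hi : 1 ≤ i) (hin : i < n)
    (hj : 1 ≤ j) :
    replicate i true ++ z ++ [false] ∈ PrimitiveDyckD n i (j + 1) ↔
      replicate i true ++ false :: z ∈ DyckD n i j := by
  have hcount : (replicate i true ++ z ++ [false]).count true =
      (replicate i true ++ false :: z).count true := by simp
  have hz : (replicate i true ++ false :: z).count true = n → true ∈ z := fun h => by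
    have : i + z.count true = n := by simpa using h
    exact count_pos_iff.mp (by omega)
  constructor
  · rintro ⟨hd, hc, hp, hlast, -⟩
    have hD := (isDyckWord_replicate_append_concat_and_isPrimitiveWord_iff hi).1 ⟨hd, hp⟩
    have hz' := hz (hcount ▸ hc)
    exact ⟨hD, hcount ▸ hc, head?_peakHeights_replicate_append_cons hi z,
      (getLast?_peakHeights_replicate_append_cons_eq_some_iff hD hz' hj).2
        ((getLast?_peakHeights_replicate_append_concat_eq_some_iff hd hz').1 hlast)⟩
  · rintro ⟨hD, hc, -, hlast⟩
    obtain ⟨hd, hp⟩ := (isDyckWord_replicate_append_concat_and_isPrimitiveWord_iff hi).2 hD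
    have hz' := hz hc
    exact ⟨hd, hcount ▸ hc, hp,
      (getLast?_peakHeights_replicate_append_concat_eq_some_iff hd hz').2
        ((getLast?_peakHeights_replicate_append_cons_eq_some_iff hD hz' hj).1 hlast),
      (le_headI_peakHeights_iff hd (by simp)).2 (by simp [append_assoc])⟩

end Bijection

theorem dyckD_eq_primitive_count_general (n : ℕ) (i j : ℕ)
    (hi : i ∈ Finset.Icc 1 (n - 1)) (hj : j ∈ Finset.Icc 1 (n - 1)) :
    (DyckD n i j).ncard =
      {w : List Bool | IsDyckWord w ∧ w.count true = n ∧ IsPrimitiveWord w ∧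
        (peakHeights w).getLast? = some (j + 1) ∧ i ≤ (peakHeights w).headI}.ncard := by
  change (DyckD n i j).ncard = (PrimitiveDyckD n i (j + 1)).ncard
  obtain ⟨hi1, hin⟩ := Finset.mem_Icc.mp hi
  have hmem (z : List Bool) := replicate_append_concat_mem_primitiveDyckD_iff (z := z) hi1
    (show i < n by omega) (Finset.mem_Icc.mp hj).1
  set S := {z | replicate i true ++ false :: z ∈ DyckD n i j}
  have hD : DyckD n i j = (replicate i true ++ false :: ·) '' S := by
    ext w
    refine ⟨fun hw => ?_, fun ⟨z, hz, hzw⟩ => hzw ▸ hz⟩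
    obtain ⟨z, rfl⟩ := (head?_peakHeights_eq_some_iff hw.1 hi1).1 hw.2.2.1
    exact ⟨z, hw, rfl⟩
  have hP : PrimitiveDyckD n i (j + 1) = (replicate i true ++ · ++ [false]) '' S := by
    ext v
    refine ⟨fun hv => ?_, fun ⟨z, hz, hzv⟩ => hzv ▸ (hmem z).2 hz⟩
    obtain ⟨z, rfl⟩ := exists_eq_replicate_append_concat_of_mem_primitiveDyckD hv
    exact ⟨z, (hmem z).1 hv, rfl⟩
  have hα : Function.Injective (replicate i true ++ false :: ·) := fun _ _ h =>
    cons_injective (append_right_injective _ h)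
  have hβ : Function.Injective (replicate i true ++ · ++ [false]) := fun _ _ h =>
    append_right_injective _ (append_left_injective _ h)
  rw [hD, hP, Set.ncard_image_of_injective S hα, Set.ncard_image_of_injective S hβ]

/-- For `n ≥ 2` and `i, j ∈ {1, …, n−1}`, `|D_n(i,j)|` equals the
number of primitive Dyck paths of semilength `n` whose last peak has height `j+1`
and whose first peak has height at least `i`. -/
theorem dyckD_eq_primitive_count (n : ℕ) (hn : 2 ≤ n) (i j : ℕ)
    (hi : i ∈ Finset.Icc 1 (n - 1)) (hj : j ∈ Finset.Icc 1 (n - 1)) :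
    (DyckD n i j).ncard =
      {w : List Bool | IsDyckWord w ∧ w.count true = n ∧ IsPrimitiveWord w ∧
        (peakHeights w).getLast? = some (j + 1) ∧ i ≤ (peakHeights w).headI}.ncard :=
  dyckD_eq_primitive_count_general n i j hi hj
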